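/- arXiv:2002.03517 — 2 statements merged into one kernel-verified Lean document; each statement's English description precedes it below -/
import Mathlib

section
/- Let D be a probability distribution on ℝᵈ, let η ~ D, let v ∈ ℝᵈ be nonzero, and let δ = tv(D, D + v) with δ > 0. Then E[|⟨v, η⟩|²]/‖v‖₂² ≥ (‖v‖₂²/200)·(1−δ)/δ². -/
/-!
Project onto `v`: the law of `Z = ⟪v, η⟫` shifted by `ε = ‖v‖²` is the image of `D + v`, so its
distance from the law of `Z` is at most `δ`, and iterating, at most `kδ` after a shift by `kε`.
A shift by `t` moves `{|x| < t/2}` onto a disjoint set, hence `Z` has mass at least `(1 - kδ)/2`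
outside `(-kε/2, kε/2)` and Markov gives `E Z² ≥ (kε/2)² (1 - kδ)/2`; take `k ≈ 1/(2δ)`.
-/

open MeasureTheory

/-- Total variation distance between two measures. -/
noncomputable def tv {α : Type*} [MeasurableSpace α] (P Q : Measure α) : ℝ :=
  ⨆ A : {s : Set α // MeasurableSet s}, |(P A.1).toReal - (Q A.1).toReal|

section TotalVariation

variable {α : Type*} [MeasurableSpace α]

lemma abs_measureReal_sub_le_tv {P Q : Measure α} [IsFiniteMeasure P] [IsFiniteMeasure Q]
    {A : Set α} (hA : MeasurableSet A) : |P.real A - Q.real A| ≤ tv P Q := by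
  refine le_ciSup_of_le ⟨P.real Set.univ + Q.real Set.univ, ?_⟩ ⟨A, hA⟩ le_rfl
  rintro _ ⟨B, rfl⟩
  exact abs_sub_le_of_nonneg_of_le measureReal_nonneg
    (le_add_of_le_of_nonneg (measureReal_mono (Set.subset_univ _)) measureReal_nonneg)
    measureReal_nonneg
    (le_add_of_nonneg_of_le measureReal_nonneg (measureReal_mono (Set.subset_univ _)))

lemma tv_le_of_forall_abs_sub_le {P Q : Measure α} {c : ℝ}
    (h : ∀ A, MeasurableSet A → |P.real A - Q.real A| ≤ c) : tv P Q ≤ c :=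
  haveI : Nonempty {s : Set α // MeasurableSet s} := ⟨⟨∅, .empty⟩⟩
  ciSup_le fun A ↦ h A.1 A.2

lemma tv_self (P : Measure α) : tv P P = 0 :=
  le_antisymm (tv_le_of_forall_abs_sub_le fun _ _ ↦ by simp)
    (Real.iSup_nonneg fun _ ↦ abs_nonneg _)

lemma tv_triangle (P Q R : Measure α) [IsFiniteMeasure P] [IsFiniteMeasure Q]
    [IsFiniteMeasure R] : tv P R ≤ tv P Q + tv Q R :=
  tv_le_of_forall_abs_sub_le fun _ hA ↦ (abs_sub_le _ _ _).trans
    (add_le_add (abs_measureReal_sub_le_tv hA) (abs_measureReal_sub_le_tv hA))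

lemma tv_map_le {β : Type*} [MeasurableSpace β] {f : α → β} (hf : Measurable f)
    (P Q : Measure α) [IsFiniteMeasure P] [IsFiniteMeasure Q] :
    tv (P.map f) (Q.map f) ≤ tv P Q :=
  tv_le_of_forall_abs_sub_le fun A hA ↦ by
    rw [map_measureReal_apply hf hA, map_measureReal_apply hf hA]
    exact abs_measureReal_sub_le_tv (hf hA)

end TotalVariation

lemma tv_map_add_nsmul_le {G : Type*} [MeasurableSpace G] [AddMonoid G] [MeasurableAdd G]
    (P : Measure G) [IsFiniteMeasure P] (a : G) (n : ℕ) :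
    tv P (P.map (· + n • a)) ≤ n * tv P (P.map (· + a)) := by
  induction n with
  | zero => simp [tv_self]
  | succ n ih =>
    have hmap : P.map (· + (n + 1) • a) = (P.map (· + n • a)).map (· + a) := by
      rw [Measure.map_map (measurable_add_const a) (measurable_add_const _)]
      congr 1
      funext x
      simp [succ_nsmul, add_assoc]
    calc tv P (P.map (· + (n + 1) • a))
        ≤ tv P (P.map (· + a)) + tv (P.map (· + a)) ((P.map (· + n • a)).map (· + a)) := by
          rw [hmap]; exact tv_triangle _ _ _
      _ ≤ tv P (P.map (· + a)) + tv P (P.map (· + n • a)) := by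
          gcongr; exact tv_map_le (measurable_add_const a) _ _
      _ ≤ (n + 1 : ℕ) * tv P (P.map (· + a)) := by push_cast; linarith

lemma ofReal_sq_mul_measure_le_lintegral (P : Measure ℝ) {c : ℝ} (hc : 0 ≤ c) :
    ENNReal.ofReal (c ^ 2) * P {x | c ≤ |x|} ≤ ∫⁻ x, ENNReal.ofReal (|x| ^ 2) ∂P := by
  refine le_trans (mul_le_mul_right ?_ _) (mul_meas_ge_le_lintegral₀ (by fun_prop) _)
  exact measure_mono fun x (hx : c ≤ |x|) ↦ ENNReal.ofReal_le_ofReal (pow_le_pow_left₀ hc hx 2)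

lemma one_sub_tv_map_add_div_two_le (P : Measure ℝ) [IsProbabilityMeasure P] (t : ℝ) :
    (1 - tv P (P.map (· + t))) / 2 ≤ P.real {x | t / 2 ≤ |x|} := by
  set A : Set ℝ := {x | |x| < t / 2}
  have hA : MeasurableSet A := measurableSet_lt (by fun_prop) measurable_const
  have hB : MeasurableSet ((· + t) ⁻¹' A) := hA.preimage (measurable_add_const t)
  have hdisj : Disjoint A ((· + t) ⁻¹' A) := by
    refine Set.disjoint_left.mpr fun x (hx : |x| < t / 2) (hxt : |x + t| < t / 2) ↦ ?_
    rw [abs_lt] at hx hxt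
    linarith
  have hsum : P.real A + P.real ((· + t) ⁻¹' A) ≤ 1 := by
    rw [← measureReal_union hdisj hB]
    exact measureReal_le_one
  have hshift : P.real A - P.real ((· + t) ⁻¹' A) ≤ tv P (P.map (· + t)) := by
    have := abs_measureReal_sub_le_tv (P := P) (Q := P.map (· + t)) hA
    rw [map_measureReal_apply (measurable_add_const t) hA] at this
    exact le_of_abs_le this
  have hcompl : P.real {x | t / 2 ≤ |x|} = 1 - P.real A := by
    rw [← probReal_compl_eq_one_sub hA]
    congr 1
    ext x
    simp [A]
  linarith

lemma exists_nat_one_sub_le_sq_mul {δ : ℝ} (hδ : 0 < δ) :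
    ∃ k : ℕ, (1 - δ) / 200 ≤ (k * δ) ^ 2 * (1 - k * δ) / 8 := by
  rcases le_or_gt 1 δ with hδ1 | hδ1
  · exact ⟨0, by simp; linarith⟩
  rcases le_or_gt (1 / 5) δ with hδ5 | hδ5
  · refine ⟨1, ?_⟩
    have : 1 / 25 ≤ δ ^ 2 := by nlinarith
    simp only [Nat.cast_one, one_mul]
    nlinarith [mul_le_mul_of_nonneg_left this (sub_nonneg.mpr hδ1.le)]
  refine ⟨⌊1 / (2 * δ)⌋₊, ?_⟩
  set s := (⌊1 / (2 * δ)⌋₊ : ℝ) * δ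
  have hs_le : s ≤ 1 / 2 := by
    have := mul_le_mul_of_nonneg_right (Nat.floor_le (by positivity : 0 ≤ 1 / (2 * δ))) hδ.le
    rwa [show 1 / (2 * δ) * δ = 1 / 2 by field_simp] at this
  have hs_gt : 3 / 10 < s := by
    have := mul_lt_mul_of_pos_right (Nat.sub_one_lt_floor (1 / (2 * δ))) hδ
    rw [show (1 / (2 * δ) - 1) * δ = 1 / 2 - δ by field_simp] at this
    linarith
  nlinarith [sq_nonneg (s - 3 / 10)]

theorem ofReal_le_lintegral_sq_of_tv_map_add_le {P : Measure ℝ} [IsProbabilityMeasure P]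
    {ε δ : ℝ} (hε : 0 ≤ ε) (hδ : 0 < δ) (htv : tv P (P.map (· + ε)) ≤ δ) :
    ENNReal.ofReal (ε ^ 2 / 200 * ((1 - δ) / δ ^ 2)) ≤ ∫⁻ x, ENNReal.ofReal (|x| ^ 2) ∂P := by
  obtain ⟨k, hk⟩ := exists_nat_one_sub_le_sq_mul hδ
  have htvk : tv P (P.map (· + k * ε)) ≤ k * δ := by
    simpa [nsmul_eq_mul] using (tv_map_add_nsmul_le P ε k).trans (by gcongr)
  have hmass := one_sub_tv_map_add_div_two_le P (k * ε)
  calc ENNReal.ofReal (ε ^ 2 / 200 * ((1 - δ) / δ ^ 2))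
      = ENNReal.ofReal ((ε / δ) ^ 2 * ((1 - δ) / 200)) := by congr 1; field_simp
    _ ≤ ENNReal.ofReal ((ε / δ) ^ 2 * ((k * δ) ^ 2 * (1 - k * δ) / 8)) := by gcongr
    _ = ENNReal.ofReal ((k * ε / 2) ^ 2 * ((1 - k * δ) / 2)) := by congr 1; field_simp; ring
    _ ≤ ENNReal.ofReal ((k * ε / 2) ^ 2) * ENNReal.ofReal (P.real {x | k * ε / 2 ≤ |x|}) := by
        rw [← ENNReal.ofReal_mul (by positivity)]
        gcongr
        linarith
    _ ≤ ∫⁻ x, ENNReal.ofReal (|x| ^ 2) ∂P := by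
        rw [measureReal_def, ENNReal.ofReal_toReal (measure_ne_top _ _)]
        exact ofReal_sq_mul_measure_le_lintegral P (by positivity)

theorem stmt5 {d : ℕ} (D : Measure (EuclideanSpace ℝ (Fin d))) [IsProbabilityMeasure D]
    (v : EuclideanSpace ℝ (Fin d)) (hv : v ≠ 0) (δ : ℝ)
    (hδ : δ = tv D (D.map (· + v))) (hpos : 0 < δ) :
    ENNReal.ofReal (‖v‖ ^ 2 / 200 * ((1 - δ) / δ ^ 2)) ≤
      (∫⁻ η, ENNReal.ofReal (|(inner ℝ v η : ℝ)| ^ 2) ∂D) / ENNReal.ofReal (‖v‖ ^ 2) := by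
  set ε := ‖v‖ ^ 2
  have hε : 0 < ε := by positivity
  set Z : EuclideanSpace ℝ (Fin d) → ℝ := fun η ↦ inner ℝ v η
  have hZ : Measurable Z := by fun_prop
  have hshift : (D.map Z).map (· + ε) = (D.map (· + v)).map Z := by
    rw [Measure.map_map (measurable_add_const ε) hZ, Measure.map_map hZ (measurable_add_const v)]
    congr 1
    funext η
    simp [Z, ε, inner_add_right]
  have htv : tv (D.map Z) ((D.map Z).map (· + ε)) ≤ δ := hshift ▸ hδ ▸ tv_map_le hZ _ _
  have := Measure.isProbabilityMeasure_map (μ := D) hZ.aemeasurable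
  have h1D := ofReal_le_lintegral_sq_of_tv_map_add_le hε.le hpos htv
  rw [lintegral_map (by fun_prop) hZ] at h1D
  rw [ENNReal.le_div_iff_mul_le (.inl (ENNReal.ofReal_pos.mpr hε).ne') (.inl ENNReal.ofReal_ne_top),
    ← ENNReal.ofReal_mul' hε.le]
  convert h1D using 2
  ring
end

section
/- For any distribution D on ℝᵈ, base classifier f : ℝᵈ → Y, and points x, x′ ∈ ℝᵈ: if Δ(x; D, f) > 2·tv(D + x, D + x′), then g(x; D, f) = g(x′; D, f). -/
open MeasureTheory

attribute [local instance] Classical.propDecidable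

/-- The score of class `y` at point `x` for the smoothing distribution `D` and
(randomized) base classifier `f`: the probability that `f(x + η) = y` for `η ~ D`. -/
noncomputable def score {d : ℕ} {Y : Type} (D : Measure (EuclideanSpace ℝ (Fin d)))
    (f : EuclideanSpace ℝ (Fin d) → PMF Y) (y : Y) (x : EuclideanSpace ℝ (Fin d)) : ENNReal :=
  ∫⁻ η, f (x + η) y ∂D

/-- The smoothed classifier: outputs the class with the highest score, breaking
ties lexicographically (i.e. choosing the least maximizer). -/
noncomputable def gOut {d : ℕ} {Y : Type} [Fintype Y] [LinearOrder Y] [Nonempty Y]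
    (D : Measure (EuclideanSpace ℝ (Fin d))) (f : EuclideanSpace ℝ (Fin d) → PMF Y)
    (x : EuclideanSpace ℝ (Fin d)) : Y :=
  (Finset.univ.filter fun a : Y => ∀ y : Y, score D f y x ≤ score D f a x).min' (by
    obtain ⟨a, -, ha⟩ := Finset.exists_max_image (Finset.univ : Finset Y)
      (fun y => score D f y x) ⟨Classical.arbitrary Y, Finset.mem_univ _⟩
    exact ⟨a, Finset.mem_filter.mpr ⟨Finset.mem_univ _, fun y => ha y (Finset.mem_univ _)⟩⟩)

/-- The gap between the highest score and the runner-up score at `x`. -/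
noncomputable def gap {d : ℕ} {Y : Type} [Fintype Y] [LinearOrder Y] [Nonempty Y]
    (D : Measure (EuclideanSpace ℝ (Fin d))) (f : EuclideanSpace ℝ (Fin d) → PMF Y)
    (x : EuclideanSpace ℝ (Fin d)) : ENNReal :=
  score D f (gOut D f x) x - ⨆ y : {y : Y // y ≠ gOut D f x}, score D f y.1 x

/-! The scores at `x` and `x'` are integrals of the same `[0, 1]`-valued function `z ↦ f z y`
against the translates `D + x` and `D + x'`. By the layer-cake formula such integrals differ by at
most the total variation distance `τ` of the two measures, so each score moves by at most `τ`.
If the top class `a` at `x` beats every other class by more than `2τ`, it therefore still beats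
every other class at `x'`, and the smoothed classifier picks `a` at `x'` as well. -/

section TotalVariation

variable {α : Type*} [MeasurableSpace α] (P Q : Measure α)

lemma tv_nonneg : 0 ≤ tv P Q :=
  Real.iSup_nonneg fun _ => abs_nonneg _

lemma tv_comm : tv P Q = tv Q P := by
  simp only [tv, abs_sub_comm]

variable [IsFiniteMeasure P] [IsFiniteMeasure Q]

lemma bddAbove_range_abs_sub_measure :
    BddAbove (Set.range fun A : {s : Set α // MeasurableSet s} =>
      |(P A.1).toReal - (Q A.1).toReal|) := by
  refine ⟨(P Set.univ).toReal + (Q Set.univ).toReal, ?_⟩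
  rintro r ⟨A, rfl⟩
  have hP : (P A.1).toReal ≤ (P Set.univ).toReal :=
    ENNReal.toReal_mono (measure_ne_top P _) (measure_mono (Set.subset_univ _))
  have hQ : (Q A.1).toReal ≤ (Q Set.univ).toReal :=
    ENNReal.toReal_mono (measure_ne_top Q _) (measure_mono (Set.subset_univ _))
  rw [abs_sub_le_iff]
  constructor <;> linarith [(P A.1).toReal_nonneg, (Q A.1).toReal_nonneg]

lemma measure_le_add_tv {A : Set α} (hA : MeasurableSet A) :
    P A ≤ Q A + ENNReal.ofReal (tv P Q) := by
  have h : (P A).toReal - (Q A).toReal ≤ tv P Q :=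
    (le_abs_self _).trans (le_ciSup (bddAbove_range_abs_sub_measure P Q) ⟨A, hA⟩)
  calc P A = ENNReal.ofReal ((Q A).toReal + ((P A).toReal - (Q A).toReal)) := by
        rw [add_sub_cancel, ENNReal.ofReal_toReal (measure_ne_top P A)]
    _ ≤ ENNReal.ofReal (Q A).toReal + ENNReal.ofReal (tv P Q) :=
        ENNReal.ofReal_le_ofReal (by linarith) |>.trans ENNReal.ofReal_add_le
    _ = Q A + ENNReal.ofReal (tv P Q) := by rw [ENNReal.ofReal_toReal (measure_ne_top Q A)]

lemma lintegral_le_lintegral_add_tv_of_measurable {g : α → ENNReal} (hg : Measurable g)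
    (hg_le : ∀ a, g a ≤ 1) :
    ∫⁻ a, g a ∂P ≤ ∫⁻ a, g a ∂Q + ENNReal.ofReal (tv P Q) := by
  set r : α → ℝ := fun a => (g a).toReal
  have hr : Measurable r := hg.ennreal_toReal
  have hr_le : ∀ a, r a ≤ 1 := fun a => by
    simpa using ENNReal.toReal_mono ENNReal.one_ne_top (hg_le a)
  have layer_cake : ∀ μ : Measure α, ∫⁻ a, g a ∂μ = ∫⁻ t in Set.Ioi 0, μ {a | t < r a} := by
    intro μ
    rw [← lintegral_eq_lintegral_meas_lt μ (.of_forall fun a => ENNReal.toReal_nonneg)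
      hr.aemeasurable]
    exact lintegral_congr fun a =>
      (ENNReal.ofReal_toReal (ne_top_of_le_ne_top ENNReal.one_ne_top (hg_le a))).symm
  set ε := ENNReal.ofReal (tv P Q)
  have hε : Measurable ((Set.Ioc (0 : ℝ) 1).indicator fun _ => ε) :=
    measurable_const.indicator measurableSet_Ioc
  -- the superlevel sets `{t < r}` are empty for `t ≥ 1`, so the error `ε` is paid on `(0, 1]` only
  have h_level : ∀ t ∈ Set.Ioi (0 : ℝ),
      P {a | t < r a} ≤ Q {a | t < r a} + (Set.Ioc (0 : ℝ) 1).indicator (fun _ => ε) t := by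
    intro t ht
    by_cases ht1 : t ≤ 1
    · rw [Set.indicator_of_mem (Set.mem_Ioc.mpr ⟨ht, ht1⟩)]
      exact measure_le_add_tv P Q (hr measurableSet_Ioi)
    · have hempty : {a | t < r a} = ∅ :=
        Set.eq_empty_of_forall_notMem fun a ha => ht1 ((le_of_lt ha).trans (hr_le a))
      simp [hempty]
  calc ∫⁻ a, g a ∂P = ∫⁻ t in Set.Ioi 0, P {a | t < r a} := layer_cake P
    _ ≤ ∫⁻ t in Set.Ioi 0, (Q {a | t < r a} + (Set.Ioc (0 : ℝ) 1).indicator (fun _ => ε) t) :=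
        setLIntegral_mono' measurableSet_Ioi h_level
    _ = ∫⁻ a, g a ∂Q + ε := by
        rw [lintegral_add_right _ hε, lintegral_indicator measurableSet_Ioc, layer_cake Q]
        simp [Measure.restrict_restrict, Set.Ioc_inter_Ioi, Real.volume_Ioc]

lemma lintegral_le_lintegral_add_tv {g : α → ENNReal} (hg_le : ∀ a, g a ≤ 1) :
    ∫⁻ a, g a ∂P ≤ ∫⁻ a, g a ∂Q + ENNReal.ofReal (tv P Q) := by
  rw [lintegral_def]
  refine iSup₂_le fun φ hφ => ?_
  calc φ.lintegral P = ∫⁻ a, φ a ∂P := (φ.lintegral_eq_lintegral P).symm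
    _ ≤ ∫⁻ a, φ a ∂Q + ENNReal.ofReal (tv P Q) :=
        lintegral_le_lintegral_add_tv_of_measurable P Q φ.measurable
          fun a => (hφ a).trans (hg_le a)
    _ ≤ ∫⁻ a, g a ∂Q + ENNReal.ofReal (tv P Q) := add_le_add_left (lintegral_mono hφ) _

end TotalVariation

section Smoothing

variable {d : ℕ} {Y : Type} (D : Measure (EuclideanSpace ℝ (Fin d)))
  (f : EuclideanSpace ℝ (Fin d) → PMF Y)

lemma score_eq_lintegral_map (y : Y) (x : EuclideanSpace ℝ (Fin d)) :
    score D f y x = ∫⁻ z, f z y ∂(D.map (· + x)) := by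
  rw [show (· + x) = ⇑(MeasurableEquiv.addRight x) from rfl, lintegral_map_equiv]
  simp only [score, MeasurableEquiv.coe_addRight, add_comm x]

lemma score_le_score_add_tv [IsFiniteMeasure D] (y : Y) (x x' : EuclideanSpace ℝ (Fin d)) :
    score D f y x ≤ score D f y x' + ENNReal.ofReal (tv (D.map (· + x)) (D.map (· + x'))) := by
  simp only [score_eq_lintegral_map]
  exact lintegral_le_lintegral_add_tv _ _ fun z => (f z).coe_le_one y

lemma score_le_score_gOut [Fintype Y] [LinearOrder Y] [Nonempty Y]
    (x : EuclideanSpace ℝ (Fin d)) (y : Y) : score D f y x ≤ score D f (gOut D f x) x := by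
  have h : gOut D f x ∈ Finset.univ.filter fun a => ∀ y, score D f y x ≤ score D f a x :=
    Finset.min'_mem _ _
  exact (Finset.mem_filter.mp h).2 y

end Smoothing

lemma ENNReal.lt_of_add_add_lt_tsub {ε S a a' b' : ENNReal} (hgap : ε + ε < a - S)
    (ha : a ≤ a' + ε) (hb : b' ≤ S + ε) : b' < a' :=
  lt_of_add_lt_add_right <| calc
    b' + ε ≤ S + ε + ε := add_le_add_left hb ε
    _ = ε + ε + S := by ring
    _ < a := lt_tsub_iff_right.mp hgap
    _ ≤ a' + ε := ha

theorem stmt10 {d : ℕ} {Y : Type} [Fintype Y] [LinearOrder Y] [Nonempty Y]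
    (D : Measure (EuclideanSpace ℝ (Fin d))) [IsProbabilityMeasure D]
    (f : EuclideanSpace ℝ (Fin d) → PMF Y) (x x' : EuclideanSpace ℝ (Fin d))
    (h : ENNReal.ofReal (2 * tv (D.map (· + x)) (D.map (· + x'))) < gap D f x) :
    gOut D f x = gOut D f x' := by
  set τ := tv (D.map (· + x)) (D.map (· + x'))
  rw [two_mul, ENNReal.ofReal_add (tv_nonneg _ _) (tv_nonneg _ _)] at h
  have h_top_at_x' : ∀ b ≠ gOut D f x, score D f b x' < score D f (gOut D f x) x' := by
    intro b hb
    refine ENNReal.lt_of_add_add_lt_tsub h (score_le_score_add_tv D f _ x x') ?_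
    calc score D f b x' ≤ score D f b x + ENNReal.ofReal τ := by
          simpa only [tv_comm] using score_le_score_add_tv D f b x' x
      _ ≤ _ := add_le_add_left
          (le_iSup (fun y : {y : Y // y ≠ gOut D f x} => score D f y.1 x) ⟨b, hb⟩) _
  by_contra hne
  exact (h_top_at_x' _ (Ne.symm hne)).not_ge (score_le_score_gOut D f x' _)
end
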